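/- Let (u_n) be a weak greedy sequence in 𝒦 with weakness parameter γ ∈ (0,1], let θ ∈ (0,1), and set q := ⌈2(γθ)^{-1}⌉². Then for all n, m ≥ 1: if σ_{n+qm}(𝒦)_H ≥ θ σ_n(𝒦)_H, then σ_n(𝒦)_H ≤ q^{1/2} d_m(𝒦)_H. -/

import Mathlib

/-! Suppose `σ := σ_n > κ · sup_{v ∈ 𝒦} dist(v, V)` with `κ = ⌈2/(γθ)⌉` and `dim V ≤ m`. Let `e` be
the normalised Gram–Schmidt residuals of the `N = κ²m` elements `u_n, …, u_{n+N-1}`. The matrix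
`⟪e_j, u_{n+i}⟫` is triangular with diagonal `dist(u_k, H_k) ≥ γθσ ≥ 2σ/κ`, so its determinant is
at least `(2σ/κ)^N`. Its rows have norm `≤ σ` (as `e ⊥ H_n`) and lie within `σ/κ` of the image of
`V`, which has dimension `≤ m`. Expanding the determinant multilinearly, the terms with more than
`m` rows from that image vanish, and Hadamard's inequality bounds the others; in total the
determinant is at most `(3κ²(κ+1))^m (σ/κ)^N < (2^{κ²})^m (σ/κ)^N = (2σ/κ)^N`, a contradiction. -/

open Metric

variable {H : Type*} [NormedAddCommGroup H] [InnerProductSpace ℝ H] [CompleteSpace H]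

/-- `greedySpace u n = H_n := span{u_1, …, u_n}` (with `u i` denoting `u_{i+1}`). -/
noncomputable def greedySpace (u : ℕ → H) (n : ℕ) : Submodule ℝ H :=
  Submodule.span ℝ (u '' {i | i < n})

/-- Greedy error `σ_n(𝒦)_H := sup_{v∈𝒦} dist(v, H_n)`. -/
noncomputable def greedyErr (K : Set H) (u : ℕ → H) (n : ℕ) : ℝ :=
  ⨆ v : K, infDist (v : H) (greedySpace u n : Set H)

/-- A weak greedy sequence in `𝒦` with weakness parameter `γ`:
`dist(u_{n+1}, H_n) ≥ γ · sup_{v∈𝒦} dist(v, H_n)` for all `n ≥ 0`. -/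
def IsWeakGreedy (K : Set H) (u : ℕ → H) (γ : ℝ) : Prop :=
  (∀ n, u n ∈ K) ∧
    ∀ n, γ * greedyErr K u n ≤ infDist (u n) (greedySpace u n : Set H)

/-- Kolmogorov `n`-width
`d_n(𝒦)_H := inf {sup_{v∈𝒦} dist(v, V) : V ⊂ H subspace, dim V ≤ n}`. -/
noncomputable def kolWidth (K : Set H) (n : ℕ) : ℝ :=
  ⨅ V : {V : Submodule ℝ H // FiniteDimensional ℝ V ∧ Module.finrank ℝ V ≤ n},
    ⨆ v : K, infDist (v : H) ((V : Submodule ℝ H) : Set H)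

open InnerProductSpace Module
open scoped EuclideanSpace

lemma three_mul_sq_mul_succ_lt_two_pow_sq {κ : ℕ} (hκ : 3 ≤ κ) :
    3 * (κ ^ 2 * (κ + 1)) < 2 ^ κ ^ 2 := by
  have h1 : κ ≤ 2 ^ (κ - 1) := by
    have := Nat.lt_two_pow_self (n := κ - 1); omega
  have h2 : κ ^ 3 ≤ 2 ^ (3 * (κ - 1)) := by
    calc κ ^ 3 ≤ (2 ^ (κ - 1)) ^ 3 := Nat.pow_le_pow_left h1 3
      _ = 2 ^ (3 * (κ - 1)) := by rw [← pow_mul, Nat.mul_comm]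
  have h3 : 3 * (κ ^ 2 * (κ + 1)) < 2 ^ (3 * (κ - 1) + 3) := by
    rw [pow_add]
    nlinarith [Nat.two_pow_pos (3 * (κ - 1))]
  have h4 : 3 * (κ - 1) + 3 ≤ κ ^ 2 := by
    have : 3 * κ ≤ κ ^ 2 := by nlinarith
    omega
  exact h3.trans_le (Nat.pow_le_pow_right two_pos h4)

lemma pow_mul_add_pow_lt {κ m : ℕ} (hκ : 3 ≤ κ) (hm : m ≠ 0) {σ D : ℝ} (hD : 0 ≤ D)
    (hDσ : κ * D < σ) :
    ((κ : ℝ) ^ 2 * (κ + 1)) ^ m * ((σ + D) / ((κ : ℝ) ^ 2 * (κ + 1)) + D) ^ (κ ^ 2 * m) <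
      (2 / κ * σ) ^ (κ ^ 2 * m) := by
  set t : ℝ := (κ : ℝ) ^ 2 * (κ + 1)
  set s : ℝ := σ / κ
  set a : ℝ := 1 + ((κ ^ 2 : ℕ) : ℝ)⁻¹
  have hκ0 : (0 : ℝ) < κ := by positivity
  have hDs : D ≤ s := by rw [le_div_iff₀ hκ0]; linarith
  have hσ : 0 < σ := by nlinarith
  have hinner : (σ + D) / t + D ≤ s * a := by
    calc (σ + D) / t + D ≤ (σ + s) / t + s := by gcongr
      _ = s * a := by simp only [t, s, a]; push_cast; field_simp; ring
  have hexp : a ^ (κ ^ 2) < 3 :=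
    Real.one_add_inv_pow_le_exp.trans_lt (Real.exp_one_lt_d9.trans (by norm_num))
  have hnum : 3 * t < 2 ^ κ ^ 2 := by
    simp only [t]; exact_mod_cast three_mul_sq_mul_succ_lt_two_pow_sq hκ
  have ht : 0 < t := by positivity
  have hs : 0 < s := by positivity
  have hsa : 0 ≤ (σ + D) / t + D := by positivity
  have ha : 0 < a := by positivity
  rw [show 2 / κ * σ = 2 * s by ring]
  clear_value t s a
  calc t ^ m * ((σ + D) / t + D) ^ (κ ^ 2 * m)
      ≤ t ^ m * (s ^ (κ ^ 2 * m) * (a ^ κ ^ 2) ^ m) := by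
        rw [← pow_mul, ← mul_pow]
        gcongr
    _ ≤ t ^ m * (s ^ (κ ^ 2 * m) * 3 ^ m) := by gcongr
    _ = (3 * t) ^ m * s ^ (κ ^ 2 * m) := by ring
    _ < ((2 : ℝ) ^ κ ^ 2) ^ m * s ^ (κ ^ 2 * m) := by gcongr
    _ = (2 * s) ^ (κ ^ 2 * m) := by rw [← pow_mul, mul_pow]

lemma not_linearIndependent_of_finrank_lt_card {ι M : Type*} [AddCommGroup M] [Module ℝ M]
    {v : ι → M} (W : Submodule ℝ M) [FiniteDimensional ℝ W] (s : Finset ι)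
    (hs : ∀ i ∈ s, v i ∈ W) (hW : finrank ℝ W < s.card) : ¬LinearIndependent ℝ v := by
  intro hv
  have hsub : LinearIndependent ℝ (fun i : s => v i) := hv.comp _ Subtype.val_injective
  have hspan : Submodule.span ℝ (Set.range fun i : s => v i) ≤ W :=
    Submodule.span_le.mpr (Set.range_subset_iff.mpr fun i => hs i i.2)
  have := Submodule.finrank_mono hspan
  rw [finrank_span_eq_card hsub, Fintype.card_coe] at this
  omega

theorem AlternatingMap.abs_apply_add_le {ι M : Type*} [Fintype ι] [DecidableEq ι]
    [AddCommGroup M] [Module ℝ M] (f : M [⋀^ι]→ₗ[ℝ] ℝ) (p : Seminorm ℝ M)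
    (hf : ∀ v, |f v| ≤ ∏ i, p (v i)) (W : Submodule ℝ M) [FiniteDimensional ℝ W] {m : ℕ}
    (hW : finrank ℝ W ≤ m) {w c : ι → M} (hwW : ∀ i, w i ∈ W) {b r t : ℝ}
    (hw : ∀ i, p (w i) ≤ b) (hc : ∀ i, p (c i) ≤ r) (ht : 1 ≤ t) :
    |f (w + c)| ≤ t ^ m * (b / t + r) ^ Fintype.card ι := by
  -- expand `f (w + c)` over the subsets `s` of arguments taken from `w`: those with `#s > m`
  -- vanish, and for `#s ≤ m` the factor `t ^ #s ≤ t ^ m` lets `b` be traded for `b / t`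
  rcases isEmpty_or_nonempty ι with _ | ⟨⟨i₀⟩⟩
  · simpa using (hf (w + c)).trans (by simpa using one_le_pow₀ ht)
  have hb : 0 ≤ b := (apply_nonneg p _).trans (hw i₀)
  have hr : 0 ≤ r := (apply_nonneg p _).trans (hc i₀)
  have ht0 : 0 < t := one_pos.trans_le ht
  have hterm : ∀ s : Finset ι, |f (s.piecewise w c)| ≤
      t ^ m * ((b / t) ^ s.card * r ^ (Fintype.card ι - s.card)) := by
    intro s
    rcases le_or_gt s.card m with hsm | hsm
    · calc |f (s.piecewise w c)| ≤ ∏ i, p (s.piecewise w c i) := hf _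
        _ ≤ ∏ i, s.piecewise (fun _ => b) (fun _ => r) i := by
          refine Finset.prod_le_prod (fun i _ => apply_nonneg p _) fun i _ => ?_
          by_cases hi : i ∈ s <;> simp [hi, hw, hc]
        _ = t ^ s.card * ((b / t) ^ s.card * r ^ (Fintype.card ι - s.card)) := by
          rw [Finset.prod_piecewise, ← mul_assoc, ← mul_pow, mul_div_cancel₀ _ ht0.ne']
          simp [Finset.card_univ_sdiff]
        _ ≤ t ^ m * ((b / t) ^ s.card * r ^ (Fintype.card ι - s.card)) := by
          gcongr
    · have hdep : ¬LinearIndependent ℝ (s.piecewise w c) :=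
        not_linearIndependent_of_finrank_lt_card W s
          (fun i hi => by simpa [Finset.piecewise_eq_of_mem _ _ _ hi] using hwW i) (hW.trans_lt hsm)
      rw [f.map_linearDependent _ hdep, abs_zero]
      positivity
  calc |f (w + c)| ≤ ∑ s : Finset ι, |f (s.piecewise w c)| := by
        rw [f.map_add_univ]; exact Finset.abs_sum_le_sum_abs _ _
    _ ≤ ∑ s : Finset ι, t ^ m * ((b / t) ^ s.card * r ^ (Fintype.card ι - s.card)) :=
        Finset.sum_le_sum fun s _ => hterm s
    _ = t ^ m * (b / t + r) ^ Fintype.card ι := by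
        rw [← Finset.mul_sum, Fintype.sum_pow_mul_eq_add_pow]

section InnerProductSpace

variable {E : Type*} [NormedAddCommGroup E] [InnerProductSpace ℝ E] {K : Set E}

noncomputable def innerCoords {ι : Type*} (e : ι → E) : E →ₗ[ℝ] EuclideanSpace ℝ ι :=
  (WithLp.linearEquiv 2 ℝ (ι → ℝ)).symm.toLinearMap ∘ₗ
    LinearMap.pi fun j => (innerSL ℝ (e j)).toLinearMap

@[simp]
lemma innerCoords_apply {ι : Type*} (e : ι → E) (x : E) (j : ι) :
    innerCoords e x j = inner ℝ (e j) x :=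
  rfl

lemma norm_innerCoords_le {ι : Type*} [Fintype ι] {e : ι → E} (he : Orthonormal ℝ e) (x : E) :
    ‖innerCoords e x‖ ≤ ‖x‖ := by
  rw [EuclideanSpace.norm_eq, Real.sqrt_le_left (norm_nonneg x)]
  simpa using he.sum_inner_products_le (s := Finset.univ) x

lemma EuclideanSpace.abs_volumeForm_eq_prod_diag {N : ℕ}
    (o : Orientation ℝ (EuclideanSpace ℝ (Fin N)) (Fin N)) (y : Fin N → EuclideanSpace ℝ (Fin N))
    (hy : ∀ i j, i < j → y i j = 0) : |o.volumeForm y| = ∏ i, |y i i| := by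
  rw [o.volumeForm_robust' (EuclideanSpace.basisFun (Fin N) ℝ), Module.Basis.det_apply,
    Matrix.det_of_isUpperTriangular, Finset.abs_prod]
  · simp [Module.Basis.toMatrix_apply]
  · intro i j hji
    simpa [Module.Basis.toMatrix_apply] using hy j i hji

lemma Submodule.exists_mem_norm_sub_eq_infDist (S : Submodule ℝ E) [FiniteDimensional ℝ S]
    (x : E) : ∃ w ∈ S, ‖x - w‖ = infDist x S := by
  refine ⟨S.starProjection x, S.starProjection_apply_mem x, ?_⟩
  rw [Submodule.starProjection_minimal, infDist_eq_iInf]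
  exact iInf_congr fun v => (dist_eq_norm _ _).symm

instance (u : ℕ → E) (n : ℕ) : FiniteDimensional ℝ (greedySpace u n) :=
  FiniteDimensional.span_of_finite ℝ ((Set.finite_Iio n).image u)

lemma greedySpace_mono (u : ℕ → E) : Monotone (greedySpace u) := fun _ _ h =>
  Submodule.span_mono (Set.image_mono fun _ hi => lt_of_lt_of_le hi h)

lemma greedySpace_eq_span_Iio (u : ℕ → E) (k : ℕ) :
    greedySpace u k = Submodule.span ℝ (u '' Set.Iio k) :=
  rfl

lemma sub_gramSchmidt_mem_greedySpace (u : ℕ → E) (k : ℕ) :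
    u k - gramSchmidt ℝ u k ∈ greedySpace u k := by
  rw [gramSchmidt_def, sub_sub_cancel, greedySpace_eq_span_Iio, ← span_gramSchmidt_Iio]
  refine Submodule.sum_mem _ fun i hi => ?_
  rw [Submodule.starProjection_singleton]
  exact Submodule.smul_mem _ _ (Submodule.subset_span ⟨i, Finset.mem_Iio.mp hi, rfl⟩)

lemma inner_gramSchmidt_eq_zero_of_mem (u : ℕ → E) {k : ℕ} {x : E} (hx : x ∈ greedySpace u k) :
    inner ℝ (gramSchmidt ℝ u k) x = 0 := by
  suffices greedySpace u k ≤ (ℝ ∙ gramSchmidt ℝ u k)ᗮ from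
    Submodule.mem_orthogonal_singleton_iff_inner_right.mp (this hx)
  refine Submodule.span_le.mpr ?_
  rintro _ ⟨i, hi, rfl⟩
  exact Submodule.mem_orthogonal_singleton_iff_inner_right.mpr (gramSchmidt_inv_triangular ℝ u hi)

lemma gramSchmidtNormed_eq_inv_norm_smul (u : ℕ → E) (k : ℕ) :
    gramSchmidtNormed ℝ u k = ‖gramSchmidt ℝ u k‖⁻¹ • gramSchmidt ℝ u k :=
  rfl

lemma inner_gramSchmidtNormed_eq_zero_of_mem (u : ℕ → E) {k : ℕ} {x : E}
    (hx : x ∈ greedySpace u k) : inner ℝ (gramSchmidtNormed ℝ u k) x = 0 := by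
  simp [gramSchmidtNormed_eq_inv_norm_smul, real_inner_smul_left,
    inner_gramSchmidt_eq_zero_of_mem u hx]

lemma inner_gramSchmidtNormed_self (u : ℕ → E) (k : ℕ) :
    inner ℝ (gramSchmidtNormed ℝ u k) (u k) = ‖gramSchmidt ℝ u k‖ := by
  have hsplit : u k = gramSchmidt ℝ u k + (u k - gramSchmidt ℝ u k) := by abel
  rw [hsplit, inner_add_right, inner_gramSchmidtNormed_eq_zero_of_mem u
    (sub_gramSchmidt_mem_greedySpace u k), add_zero, gramSchmidtNormed_eq_inv_norm_smul,
    real_inner_smul_left, real_inner_self_eq_norm_sq]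
  rcases eq_or_ne ‖gramSchmidt ℝ u k‖ 0 with h | h
  · simp [h]
  · field_simp

lemma infDist_le_norm_gramSchmidt (u : ℕ → E) (k : ℕ) :
    infDist (u k) (greedySpace u k : Set E) ≤ ‖gramSchmidt ℝ u k‖ := by
  simpa [dist_eq_norm] using
    infDist_le_dist_of_mem (x := u k) (sub_gramSchmidt_mem_greedySpace u k)

lemma orthonormal_gramSchmidtNormed_comp {ι : Type*} (u : ℕ → E) {g : ι → ℕ}
    (hg : Function.Injective g) (hne : ∀ i, gramSchmidt ℝ u (g i) ≠ 0) :
    Orthonormal ℝ (gramSchmidtNormed ℝ u ∘ g) := by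
  refine ⟨fun i => ?_, fun i j hij => ?_⟩
  · rw [Function.comp_apply, gramSchmidtNormed_eq_inv_norm_smul, norm_smul, norm_inv, norm_norm,
      inv_mul_cancel₀ (norm_ne_zero_iff.mpr (hne i))]
  · simp [gramSchmidtNormed_eq_inv_norm_smul, real_inner_smul_left, real_inner_smul_right,
      gramSchmidt_orthogonal ℝ u (hg.ne hij)]

lemma bddAbove_range_infDist (hK : IsCompact K) (S : Submodule ℝ E) :
    BddAbove (Set.range fun v : K => infDist (v : E) S) := by
  obtain ⟨R, hR⟩ := isBounded_iff_forall_norm_le.mp hK.isBounded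
  refine ⟨R, Set.forall_mem_range.mpr fun v => ?_⟩
  calc infDist (v : E) S ≤ dist (v : E) 0 := infDist_le_dist_of_mem S.zero_mem
    _ ≤ R := by simpa using hR v v.2

lemma infDist_le_iSup_infDist (hK : IsCompact K) (S : Submodule ℝ E) {v : E} (hv : v ∈ K) :
    infDist v S ≤ ⨆ v : K, infDist (v : E) S :=
  le_ciSup (bddAbove_range_infDist hK S) ⟨v, hv⟩

lemma greedyErr_antitone (hK : IsCompact K) (u : ℕ → E) : Antitone (greedyErr K u) :=
  fun _ _ h => ciSup_mono (bddAbove_range_infDist hK _) fun _ =>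
    infDist_le_infDist_of_subset (greedySpace_mono u h) ⟨0, Submodule.zero_mem _⟩

lemma abs_volumeForm_innerCoords_gramSchmidtNormed (u : ℕ → E) (n : ℕ) {N : ℕ}
    (o : Orientation ℝ (EuclideanSpace ℝ (Fin N)) (Fin N)) :
    |o.volumeForm (innerCoords (fun j : Fin N => gramSchmidtNormed ℝ u (n + j)) ∘
      fun i => u (n + i))| = ∏ i : Fin N, ‖gramSchmidt ℝ u (n + i)‖ := by
  rw [EuclideanSpace.abs_volumeForm_eq_prod_diag]
  · simp [inner_gramSchmidtNormed_self]
  · intro i j hij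
    exact inner_gramSchmidtNormed_eq_zero_of_mem u
      (Submodule.subset_span ⟨n + i, by simpa using hij, rfl⟩)

lemma norm_innerCoords_le_greedyErr (hK : IsCompact K) (u : ℕ → E) (n : ℕ) {ι : Type*}
    [Fintype ι] {e : ι → E} (he : Orthonormal ℝ e)
    (he_perp : ∀ j, ∀ y ∈ greedySpace u n, inner ℝ (e j) y = 0) {x : E} (hx : x ∈ K) :
    ‖innerCoords e x‖ ≤ greedyErr K u n := by
  obtain ⟨q, hq, hxq⟩ := (greedySpace u n).exists_mem_norm_sub_eq_infDist x
  have hTq : innerCoords e q = 0 := by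
    ext j
    exact he_perp j q hq
  calc ‖innerCoords e x‖ = ‖innerCoords e (x - q)‖ := by rw [map_sub, hTq, sub_zero]
    _ ≤ ‖x - q‖ := norm_innerCoords_le he _
    _ ≤ greedyErr K u n := hxq.trans_le (infDist_le_iSup_infDist hK _ hx)

theorem greedyErr_le_mul_iSup_infDist (hK : IsCompact K) {u : ℕ → E} (hu : ∀ k, u k ∈ K)
    {n m κ : ℕ} (hκ : 3 ≤ κ) (hm : m ≠ 0)
    (hres : ∀ k < κ ^ 2 * m, 2 / κ * greedyErr K u n ≤ ‖gramSchmidt ℝ u (n + k)‖)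
    (V : Submodule ℝ E) [FiniteDimensional ℝ V] (hV : finrank ℝ V ≤ m) :
    greedyErr K u n ≤ κ * ⨆ v : K, infDist (v : E) V := by
  set σ := greedyErr K u n
  set D := ⨆ v : K, infDist (v : E) V
  by_contra! hDσ
  have hD : 0 ≤ D := Real.iSup_nonneg fun _ => infDist_nonneg
  have hσ : 0 < σ := hDσ.trans_le' (by positivity)
  set N := κ ^ 2 * m
  set x : Fin N → E := fun i => u (n + i)
  set e : Fin N → E := fun j => gramSchmidtNormed ℝ u (n + j)
  have hres_pos : ∀ i : Fin N, 0 < ‖gramSchmidt ℝ u (n + i)‖ := fun i =>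
    (hres i i.2).trans_lt' (by positivity)
  have he : Orthonormal ℝ e :=
    orthonormal_gramSchmidtNormed_comp u (g := fun i : Fin N => n + i)
      (fun i j h => Fin.ext (by simpa using h)) fun i => norm_pos_iff.mp (hres_pos i)
  let o : Orientation ℝ (EuclideanSpace ℝ (Fin N)) (Fin N) :=
    (EuclideanSpace.basisFun (Fin N) ℝ).toBasis.orientation
  let p : Seminorm ℝ E := (normSeminorm ℝ _).comp (innerCoords e)
  have hlower : (2 / κ * σ) ^ N ≤ |o.volumeForm (innerCoords e ∘ x)| := by
    rw [abs_volumeForm_innerCoords_gramSchmidtNormed, ← Fin.prod_const]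
    exact Finset.prod_le_prod (fun _ _ => by positivity) fun i _ => hres i i.2
  obtain ⟨w, hwV, hw⟩ : ∃ w : Fin N → E, (∀ i, w i ∈ V) ∧ ∀ i, ‖x i - w i‖ ≤ D := by
    choose w hwV hw using fun i => V.exists_mem_norm_sub_eq_infDist (x i)
    exact ⟨w, hwV, fun i => (hw i).le.trans (infDist_le_iSup_infDist hK V (hu _))⟩
  have hx : ∀ i, p (x i) ≤ σ := fun i =>
    norm_innerCoords_le_greedyErr hK u n he
      (fun j _ hy => inner_gramSchmidtNormed_eq_zero_of_mem u (greedySpace_mono u (by omega) hy))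
      (hu _)
  have hc : ∀ i, p ((x - w) i) ≤ D := fun i => (norm_innerCoords_le he _).trans (hw i)
  have hw' : ∀ i, p (w i) ≤ σ + D := fun i => by
    simpa using (map_sub_le_add p (x i) (x i - w i)).trans (add_le_add (hx i) (hc i))
  have hκ1 : (1 : ℝ) ≤ κ := by exact_mod_cast (by omega : 1 ≤ κ)
  have hupper := (o.volumeForm.compLinearMap (innerCoords e)).abs_apply_add_le p
    (fun v => o.abs_volumeForm_apply_le (innerCoords e ∘ v)) V hV hwV hw' hc
    (t := (κ : ℝ) ^ 2 * (κ + 1)) (one_le_mul_of_one_le_of_one_le (one_le_pow₀ hκ1) (by linarith))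
  rw [add_sub_cancel, Fintype.card_fin] at hupper
  exact (pow_mul_add_pow_lt hκ hm hD hDσ).not_ge (hlower.trans hupper)

end InnerProductSpace

theorem weakGreedy_conditional_delayed_comparison_general
    (K : Set H) (hK : IsCompact K) (u : ℕ → H) (γ : ℝ)
    (hγ0 : 0 < γ) (hγ1 : γ ≤ 1) (hwg : IsWeakGreedy K u γ)
    (θ : ℝ) (hθ0 : 0 < θ) (hθ1 : θ < 1)
    (n m : ℕ) (hm : 1 ≤ m)
    (hcond : θ * greedyErr K u n ≤ greedyErr K u (n + (⌈2 * (γ * θ)⁻¹⌉₊) ^ 2 * m)) :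
    greedyErr K u n ≤ Real.sqrt ((⌈2 * (γ * θ)⁻¹⌉₊ : ℝ) ^ 2) * kolWidth K m := by
  obtain ⟨hu, hweak⟩ := hwg
  set κ := ⌈2 * (γ * θ)⁻¹⌉₊
  have hγθ : 0 < γ * θ := mul_pos hγ0 hθ0
  have hκ : 3 ≤ κ := Nat.lt_ceil.mpr <| by
    have : 1 < (γ * θ)⁻¹ := (one_lt_inv₀ hγθ).mpr (by nlinarith)
    push_cast; linarith
  have hκ0 : (0 : ℝ) < κ := by positivity
  have hκγθ : 2 / κ ≤ γ * θ := by
    rw [div_le_iff₀ hκ0, ← div_le_iff₀' hγθ, div_eq_mul_inv]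
    exact Nat.le_ceil _
  have hσ : 0 ≤ greedyErr K u n := Real.iSup_nonneg fun _ => infDist_nonneg
  have hres : ∀ k < κ ^ 2 * m, 2 / κ * greedyErr K u n ≤ ‖gramSchmidt ℝ u (n + k)‖ :=
    fun k hk => calc
      2 / κ * greedyErr K u n ≤ γ * (θ * greedyErr K u n) := by nlinarith
      _ ≤ γ * greedyErr K u (n + k) := by
        gcongr; exact hcond.trans (greedyErr_antitone hK u (by omega))
      _ ≤ ‖gramSchmidt ℝ u (n + k)‖ := (hweak _).trans (infDist_le_norm_gramSchmidt u _)
  have : Nonempty {V : Submodule ℝ H // FiniteDimensional ℝ V ∧ finrank ℝ V ≤ m} :=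
    ⟨⟨⊥, inferInstance, by simp⟩⟩
  rw [Real.sqrt_sq hκ0.le, ← div_le_iff₀' hκ0]
  exact le_ciInf fun ⟨V, _, hV⟩ => (div_le_iff₀' hκ0).mpr
    (greedyErr_le_mul_iSup_infDist hK hu hκ (by omega) hres V hV)

/-- conditional delayed comparison, Lemma 2.2 of [BCDDPW]: with
`q := ⌈2(γθ)⁻¹⌉²`, if `σ_{n+qm}(𝒦)_H ≥ θ σ_n(𝒦)_H` then `σ_n(𝒦)_H ≤ q^{1/2} d_m(𝒦)_H`. -/
theorem weakGreedy_conditional_delayed_comparison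
    (K : Set H) (hK : IsCompact K) (u : ℕ → H) (γ : ℝ)
    (hγ0 : 0 < γ) (hγ1 : γ ≤ 1) (hwg : IsWeakGreedy K u γ)
    (θ : ℝ) (hθ0 : 0 < θ) (hθ1 : θ < 1)
    (n m : ℕ) (hn : 1 ≤ n) (hm : 1 ≤ m)
    (hcond : θ * greedyErr K u n ≤ greedyErr K u (n + (⌈2 * (γ * θ)⁻¹⌉₊) ^ 2 * m)) :
    greedyErr K u n ≤ Real.sqrt ((⌈2 * (γ * θ)⁻¹⌉₊ : ℝ) ^ 2) * kolWidth K m :=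
  weakGreedy_conditional_delayed_comparison_general K hK u γ hγ0 hγ1 hwg θ hθ0 hθ1 n m hm hcond
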